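/- Let A and B be lattices and suppose A ⊠ B is nonempty. Then A ⊠ B is an ideal of the lattice A □ B: it is nonempty; if H ∈ A ⊠ B, K ∈ A □ B and K ⊆ H, then K ∈ A ⊠ B; and if H, K ∈ A ⊠ B, then their join BoxCl(H ∪ K) in A □ B belongs to A ⊠ B. In particular, A ⊠ B is a lattice under set inclusion. -/

import Mathlib

/-!
Write a confined `H = ⋂ᵢ aᵢ □ bᵢ ⊆ α ⊠ β`. A point of `H` with no bottom coordinate lies below
one of the finitely many corners `(α ⊓ ⋀_{i ∈ T} aᵢ, β ⊓ ⋀_{i ∉ T} bᵢ)` of `H`, which are points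
of `H`. So for `H, K` in `A ⊠ B` a box `u □ v` contains `H ∪ K` iff the corners of `H` and `K`
split into those below `u` in the first and those below `v` in the second coordinate. Since `H`
contains the lines `{⋀ aᵢ} × B` and `A × {⋀ bᵢ}`, a proper such box also has `⋀ aᵢ ≤ u` and
`⋀ bᵢ ≤ v`; hence finitely many boxes, one per splitting, already cut out `BoxCl (H ∪ K)`. The
same lines force `⋀ aᵢ` to be a bottom or `β` a top (and symmetrically), which makes the pure
tensor `(α ⊔ γ) ⊠ (β ⊔ δ)` containing `H ∪ K` closed under `BoxCl`.
-/

/-- The pure box `a □ b = {⟨x,y⟩ : x ≤ a or y ≤ b}`. -/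
def pureBox {A B : Type*} [Lattice A] [Lattice B] (a : A) (b : B) : Set (A × B) :=
  {p : A × B | p.1 ≤ a ∨ p.2 ≤ b}

/-- `a ∘ b = {⟨x,y⟩ : x ≤ a and y ≤ b}`. -/
def pureCirc {A B : Type*} [Lattice A] [Lattice B] (a : A) (b : B) : Set (A × B) :=
  {p : A × B | p.1 ≤ a ∧ p.2 ≤ b}

/-- The box product `A □ B`: all finite (nonempty) intersections of pure boxes. -/
def BoxProd (A B : Type*) [Lattice A] [Lattice B] : Set (Set (A × B)) :=
  {H | ∃ (n : ℕ) (a : Fin (n + 1) → A) (b : Fin (n + 1) → B),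
    H = ⋂ i, pureBox (a i) (b i)}

/-- `A ⊡ B`: all finite unions of pure boxes (at least one) and pure circles. -/
def BoxDot (A B : Type*) [Lattice A] [Lattice B] : Set (Set (A × B)) :=
  {H | ∃ (m n : ℕ) (a : Fin (m + 1) → A) (b : Fin (m + 1) → B)
      (c : Fin n → A) (d : Fin n → B),
    H = (⋃ i, pureBox (a i) (b i)) ∪ ⋃ j, pureCirc (c j) (d j)}

/-- The box closure of a subset of `A × B`: intersection of all pure boxes containing it. -/
def BoxCl {A B : Type*} [Lattice A] [Lattice B] (X : Set (A × B)) : Set (A × B) :=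
  ⋂ (a : A) (b : B) (_ : X ⊆ pureBox a b), pureBox a b

/-- The pure lattice tensor `a ⊠ b = (a ∘ b) ∪ ⊥_{A,B}`, where `⊥_{A,B}` consists of
the pairs one of whose coordinates is a least element. -/
def pureTens {A B : Type*} [Lattice A] [Lattice B] (a : A) (b : B) : Set (A × B) :=
  pureCirc a b ∪ {p : A × B | IsBot p.1 ∨ IsBot p.2}

/-- A subset of `A × B` is confined if it is contained in some pure lattice tensor. -/
def Confined {A B : Type*} [Lattice A] [Lattice B] (X : Set (A × B)) : Prop :=
  ∃ (a : A) (b : B), X ⊆ pureTens a b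

/-- The lattice tensor product `A ⊠ B`: all confined elements of `A □ B`. -/
def LatTens (A B : Type*) [Lattice A] [Lattice B] : Set (Set (A × B)) :=
  {H | H ∈ BoxProd A B ∧ Confined H}

/-- `X^△ = {⟨a,b⟩ : ⟨x,y⟩ ◁ ⟨a,b⟩ for all ⟨x,y⟩ ∈ X}` where `⟨x,y⟩ ◁ ⟨a,b⟩` iff
`x ≤ a` or `y ≤ b`. -/
def trUp {A B : Type*} [Lattice A] [Lattice B] (X : Set (A × B)) : Set (A × B) :=
  {p : A × B | ∀ q ∈ X, q.1 ≤ p.1 ∨ q.2 ≤ p.2}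

/-- `X^▽ = {⟨a,b⟩ : ⟨a,b⟩ ◁ ⟨x,y⟩ for all ⟨x,y⟩ ∈ X}`. -/
def trDown {A B : Type*} [Lattice A] [Lattice B] (X : Set (A × B)) : Set (A × B) :=
  {p : A × B | ∀ q ∈ X, p.1 ≤ q.1 ∨ p.2 ≤ q.2}

namespace Finset

variable {ι L : Type*} {s : Finset ι} {f : ι → L} {x c : L}

theorem le_fold_inf_iff [SemilatticeInf L] :
    c ≤ s.fold (· ⊓ · : L → L → L) x f ↔ c ≤ x ∧ ∀ i ∈ s, c ≤ f i :=
  fold_op_rel_iff_and le_inf_iff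

theorem fold_sup_le_iff [SemilatticeSup L] :
    s.fold (· ⊔ · : L → L → L) x f ≤ c ↔ x ≤ c ∧ ∀ i ∈ s, f i ≤ c :=
  fold_op_rel_iff_and (r := fun c y => y ≤ c) sup_le_iff

theorem le_fold_sup_of_mem [SemilatticeSup L] {i : ι} (hi : i ∈ s) :
    f i ≤ s.fold (· ⊔ · : L → L → L) x f :=
  (fold_sup_le_iff.1 le_rfl).2 i hi

end Finset

section BoxProduct

open Finset

variable {A B : Type*} [Lattice A] [Lattice B]

theorem mem_boxCl {X : Set (A × B)} {p : A × B} :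
    p ∈ BoxCl X ↔ ∀ a b, X ⊆ pureBox a b → p ∈ pureBox a b := by
  simp [BoxCl]

theorem boxCl_subset_pureBox {X : Set (A × B)} {a : A} {b : B} (h : X ⊆ pureBox a b) :
    BoxCl X ⊆ pureBox a b :=
  fun _ hp => mem_boxCl.1 hp a b h

theorem pureBox_mono {a a' : A} {b b' : B} (ha : a ≤ a') (hb : b ≤ b') :
    pureBox a b ⊆ pureBox a' b' :=
  fun _ hp => hp.imp (·.trans ha) (·.trans hb)

theorem pureTens_mono {a a' : A} {b b' : B} (ha : a ≤ a') (hb : b ≤ b') :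
    pureTens a b ⊆ pureTens a' b' :=
  Set.union_subset_union_left _ fun _ hp => ⟨hp.1.trans ha, hp.2.trans hb⟩

theorem iInter_pureBox_mem_boxProd {ι : Type*} [Finite ι] [Nonempty ι] (a : ι → A) (b : ι → B) :
    ⋂ i, pureBox (a i) (b i) ∈ BoxProd A B := by
  obtain ⟨n, ⟨e⟩⟩ := Finite.exists_equiv_fin ι
  cases n with
  | zero => exact (e (Classical.arbitrary ι)).elim0
  | succ m =>
    exact ⟨m, a ∘ e.symm, b ∘ e.symm,
      (e.symm.surjective.iInter_comp fun i => pureBox (a i) (b i)).symm⟩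

theorem inter_mem_boxProd {H K : Set (A × B)} (hH : H ∈ BoxProd A B) (hK : K ∈ BoxProd A B) :
    H ∩ K ∈ BoxProd A B := by
  obtain ⟨n, a, b, rfl⟩ := hH
  obtain ⟨m, c, d, rfl⟩ := hK
  have h := iInter_pureBox_mem_boxProd (Sum.elim a c) (Sum.elim b d)
  rwa [Set.iInter_sum] at h

theorem boxCl_eq_iInter_pureBox {κ : Type*} {Y : Set (A × B)} (u : κ → A) (v : κ → B)
    (hY : ∀ k, Y ⊆ pureBox (u k) (v k))
    (hmin : ∀ x y, Y ⊆ pureBox x y → ∃ k, pureBox (u k) (v k) ⊆ pureBox x y) :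
    BoxCl Y = ⋂ k, pureBox (u k) (v k) := by
  refine (Set.subset_iInter fun k => boxCl_subset_pureBox (hY k)).antisymm fun p hp => ?_
  refine mem_boxCl.2 fun x y hxy => ?_
  obtain ⟨k, hk⟩ := hmin x y hxy
  exact hk (Set.mem_iInter.1 hp k)

theorem le_of_forall_mem_pureBox {x u : A} {v : B} (h : ∀ y, (x, y) ∈ pureBox u v)
    (hv : ¬IsTop v) : x ≤ u := by
  obtain ⟨y, hy⟩ := not_forall.1 hv
  exact (h y).resolve_right hy

theorem le_of_forall_mem_pureBox' {y : B} {u : A} {v : B} (h : ∀ x, (x, y) ∈ pureBox u v)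
    (hu : ¬IsTop u) : y ≤ v := by
  obtain ⟨x, hx⟩ := not_forall.1 hu
  exact (h x).resolve_left hx

/-- A box `u □ v ≠ A × B` contains `Y` iff it contains the generators `q k`, i.e. iff they split
into those below `u` in the first and those below `v` in the second coordinate; the lines in `Y`
give `a₀ ≤ u` and `b₀ ≤ v`, which stand in for the empty joins of such a splitting. -/
theorem boxCl_mem_boxProd_of_generators {κ : Type*} [Fintype κ] {Y : Set (A × B)}
    (q : κ → A × B) (a₀ : A) (b₀ : B) (hq : ∀ k, q k ∈ Y)
    (hcover : ∀ p ∈ Y, IsBot p.1 ∨ IsBot p.2 ∨ ∃ k, p ≤ q k)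
    (ha₀ : ∀ y, (a₀, y) ∈ Y) (hb₀ : ∀ x, (x, b₀) ∈ Y) :
    BoxCl Y ∈ BoxProd A B := by
  classical
  rw [boxCl_eq_iInter_pureBox
    (fun L : Finset κ => L.fold (· ⊔ · : A → A → A) a₀ fun k => (q k).1)
    (fun L => Lᶜ.fold (· ⊔ · : B → B → B) b₀ fun k => (q k).2) ?_ ?_]
  · exact iInter_pureBox_mem_boxProd _ _
  · intro L p hp
    rcases hcover p hp with h | h | ⟨k, hk⟩
    · exact Or.inl (h _)
    · exact Or.inr (h _)
    · by_cases hkL : k ∈ L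
      · exact Or.inl (hk.1.trans (le_fold_sup_of_mem (f := fun k => (q k).1) hkL))
      · exact Or.inr (hk.2.trans (le_fold_sup_of_mem (f := fun k => (q k).2) (mem_compl.2 hkL)))
  · intro u v hY
    by_cases hu : IsTop u
    · exact ⟨∅, fun p _ => Or.inl (hu p.1)⟩
    by_cases hv : IsTop v
    · exact ⟨∅, fun p _ => Or.inr (hv p.2)⟩
    refine ⟨univ.filter fun k => (q k).1 ≤ u, pureBox_mono
      (fold_sup_le_iff.2 ⟨le_of_forall_mem_pureBox (fun y => hY (ha₀ y)) hv, fun k hk => ?_⟩)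
      (fold_sup_le_iff.2 ⟨le_of_forall_mem_pureBox' (fun x => hY (hb₀ x)) hu, fun k hk => ?_⟩)⟩
    · exact (mem_filter.1 hk).2
    · exact (hY (hq k)).resolve_left (by simpa using hk)

theorem isBot_or_isTop_of_forall_mem_pureTens {x e : A} {f : B}
    (h : ∀ y, (x, y) ∈ pureTens e f) : IsBot x ∨ IsTop f := by
  refine or_iff_not_imp_left.2 fun hx y => ?_
  rcases h (y ⊔ f) with ⟨-, hy⟩ | hb | hb
  · exact le_sup_left.trans hy
  · exact absurd hb hx
  · exact le_sup_left.trans (hb f)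

theorem isBot_or_isTop_of_forall_mem_pureTens' {y : B} {e : A} {f : B}
    (h : ∀ x, (x, y) ∈ pureTens e f) : IsBot y ∨ IsTop e := by
  refine or_iff_not_imp_left.2 fun hy x => ?_
  rcases h (x ⊔ e) with ⟨hx, -⟩ | hb | hb
  · exact le_sup_left.trans hx
  · exact le_sup_left.trans (hb e)
  · exact absurd hb hy

theorem pureTens_subset_pureBox_inter (e x : A) (f y : B) :
    pureTens e f ⊆ pureBox x f ∩ pureBox e y := by
  rintro p (⟨h1, h2⟩ | h | h)
  · exact ⟨Or.inr h2, Or.inl h1⟩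
  · exact ⟨Or.inl (h x), Or.inl (h e)⟩
  · exact ⟨Or.inr (h f), Or.inr (h y)⟩

theorem pureBox_inter_subset_pureTens {e a₀ : A} {f b₀ : B} (ha : IsBot a₀ ∨ IsTop f)
    (hb : IsBot b₀ ∨ IsTop e) : pureBox a₀ f ∩ pureBox e b₀ ⊆ pureTens e f := by
  rintro p ⟨h₁ | h₁, h₂ | h₂⟩ <;> rcases ha with ha | ha <;> rcases hb with hb | hb <;>
    first
    | exact Or.inr (Or.inl fun z => h₁.trans (ha z))
    | exact Or.inr (Or.inr fun z => h₂.trans (hb z))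
    | exact Or.inl ⟨hb p.1, ha p.2⟩
    | exact Or.inl ⟨h₂, ha p.2⟩
    | exact Or.inl ⟨hb p.1, h₁⟩
    | exact Or.inl ⟨h₂, h₁⟩

/-- `Y` lies in `(a₀ □ f) ∩ (e □ b₀)`, which is inside `e ⊠ f` since the lines in `Y` force `a₀` to
be a bottom or `f` a top, and `b₀` to be a bottom or `e` a top. -/
theorem boxCl_subset_pureTens {Y : Set (A × B)} {e a₀ : A} {f b₀ : B}
    (hY : Y ⊆ pureTens e f) (ha₀ : ∀ y, (a₀, y) ∈ Y) (hb₀ : ∀ x, (x, b₀) ∈ Y) :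
    BoxCl Y ⊆ pureTens e f := by
  have hbox := hY.trans (pureTens_subset_pureBox_inter e a₀ f b₀)
  exact (Set.subset_inter (boxCl_subset_pureBox (hbox.trans Set.inter_subset_left))
    (boxCl_subset_pureBox (hbox.trans Set.inter_subset_right))).trans
    (pureBox_inter_subset_pureTens (isBot_or_isTop_of_forall_mem_pureTens fun y => hY (ha₀ y))
      (isBot_or_isTop_of_forall_mem_pureTens' fun x => hY (hb₀ x)))

section Corners

variable {ι : Type*} [Fintype ι] [DecidableEq ι] (α : A) (β : B) (a : ι → A) (b : ι → B)

/-- The largest point of `α ∘ β` lying in `a i □ b i` through its first coordinate for `i ∈ T`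
and through its second coordinate for `i ∉ T`. -/
def corner (T : Finset ι) : A × B :=
  (T.fold (· ⊓ · : A → A → A) α a, Tᶜ.fold (· ⊓ · : B → B → B) β b)

theorem corner_mem_iInter_pureBox (T : Finset ι) :
    corner α β a b T ∈ ⋂ i, pureBox (a i) (b i) := by
  refine Set.mem_iInter.2 fun i => ?_
  by_cases hi : i ∈ T
  · exact Or.inl ((le_fold_inf_iff.1 le_rfl).2 i hi)
  · exact Or.inr ((le_fold_inf_iff.1 le_rfl).2 i (mem_compl.2 hi))

variable {α β a b}

theorem exists_le_corner (hH : ⋂ i, pureBox (a i) (b i) ⊆ pureTens α β) {p : A × B}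
    (hp : p ∈ ⋂ i, pureBox (a i) (b i)) :
    IsBot p.1 ∨ IsBot p.2 ∨ ∃ T, p ≤ corner α β a b T := by
  classical
  rcases hH hp with ⟨hα, hβ⟩ | h | h
  · refine Or.inr (Or.inr ⟨univ.filter fun i => p.1 ≤ a i, le_fold_inf_iff.2 ⟨hα, ?_⟩,
      le_fold_inf_iff.2 ⟨hβ, fun i hi => ?_⟩⟩)
    · simp
    · exact (Set.mem_iInter.1 hp i).resolve_left (by simpa using hi)
  · exact Or.inl h
  · exact Or.inr (Or.inl h)

end Corners

section Lines

variable {ι : Type*} [Fintype ι] [Nonempty ι] (a : ι → A) (b : ι → B)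

theorem mk_inf'_left_mem_iInter_pureBox (y : B) :
    (univ.inf' univ_nonempty a, y) ∈ ⋂ i, pureBox (a i) (b i) :=
  Set.mem_iInter.2 fun i => Or.inl (inf'_le a (mem_univ i))

theorem mk_inf'_right_mem_iInter_pureBox (x : A) :
    (x, univ.inf' univ_nonempty b) ∈ ⋂ i, pureBox (a i) (b i) :=
  Set.mem_iInter.2 fun i => Or.inr (inf'_le b (mem_univ i))

end Lines

theorem boxCl_union_mem_latTens {H K : Set (A × B)} (hH : H ∈ LatTens A B)
    (hK : K ∈ LatTens A B) : BoxCl (H ∪ K) ∈ LatTens A B := by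
  obtain ⟨⟨n, a, b, rfl⟩, α, β, hHα⟩ := hH
  obtain ⟨⟨m, c, d, rfl⟩, γ, δ, hKγ⟩ := hK
  have ha₀ := fun y =>
    Set.mem_union_left (⋂ j, pureBox (c j) (d j)) (mk_inf'_left_mem_iInter_pureBox a b y)
  have hb₀ := fun x =>
    Set.mem_union_left (⋂ j, pureBox (c j) (d j)) (mk_inf'_right_mem_iInter_pureBox a b x)
  refine ⟨boxCl_mem_boxProd_of_generators (Sum.elim (corner α β a b) (corner γ δ c d)) _ _
    ?_ ?_ ha₀ hb₀, α ⊔ γ, β ⊔ δ, boxCl_subset_pureTens ?_ ha₀ hb₀⟩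
  · rintro (T | T)
    · exact Or.inl (corner_mem_iInter_pureBox α β a b T)
    · exact Or.inr (corner_mem_iInter_pureBox γ δ c d T)
  · rintro p (hp | hp)
    · exact (exists_le_corner hHα hp).imp_right
        (Or.imp_right fun ⟨T, hT⟩ => ⟨Sum.inl T, hT⟩)
    · exact (exists_le_corner hKγ hp).imp_right
        (Or.imp_right fun ⟨T, hT⟩ => ⟨Sum.inr T, hT⟩)
  · exact Set.union_subset (hHα.trans (pureTens_mono le_sup_left le_sup_left))
      (hKγ.trans (pureTens_mono le_sup_right le_sup_right))

end BoxProduct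

/-- If `A ⊠ B` is nonempty, then it is an ideal of the lattice `A □ B`;
in particular, it is a lattice under set inclusion. -/
theorem stmt_5 {A B : Type*} [Lattice A] [Lattice B]
    (hne : (LatTens A B).Nonempty) :
    (LatTens A B).Nonempty ∧
    (∀ H ∈ LatTens A B, ∀ K ∈ BoxProd A B, K ⊆ H → K ∈ LatTens A B) ∧
    (∀ H ∈ LatTens A B, ∀ K ∈ LatTens A B, BoxCl (H ∪ K) ∈ LatTens A B) ∧
    (∀ H ∈ LatTens A B, ∀ K ∈ LatTens A B, H ∩ K ∈ LatTens A B) := by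
  refine ⟨hne, ?_, fun H hH K hK => boxCl_union_mem_latTens hH hK, ?_⟩
  · rintro H ⟨-, a, b, hHab⟩ K hK hKH
    exact ⟨hK, a, b, hKH.trans hHab⟩
  · rintro H ⟨hH, a, b, hHab⟩ K ⟨hK, -⟩
    exact ⟨inter_mem_boxProd hH hK, a, b, Set.inter_subset_left.trans hHab⟩
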